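/- arXiv:1506.05721 — 2 statements merged into one kernel-verified Lean document; each statement's English description precedes it below -/
import Mathlib

section
/- (Midpoint claim.) Let δ ∈ (0,1/2]. Let j be a job with real parameters and p_j > 0, and let j* be a job with real parameters and r_{j*} < d_{j*}. If I(j*) ⊆ I(j) and I(j*) ∩ I_δ(j) ≠ ∅ (i.e., j δ-dominates j*), then the midpoint (r_{j*} + d_{j*})/2 lies in I_{δ/2}(j). -/
/-- A job with real parameters: release date `r`, deadline `d`, processing time `p`. -/
structure RJob where
  r : ℝ
  d : ℝ
  p : ℝ

/-- A real-parameter job is valid if `p ≥ 0` and `r + p ≤ d`. -/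
def RJob.valid (j : RJob) : Prop := 0 ≤ j.p ∧ j.r + j.p ≤ j.d

/-- The interval `I(j) = [r_j, d_j)` of a real-parameter job. -/
def RJob.interval (j : RJob) : Set ℝ := Set.Ico j.r j.d

/-- The laxity `ℓ_j = d_j - r_j - p_j`. -/
def RJob.lax (j : RJob) : ℝ := j.d - j.r - j.p

/-- The `δ`-interval `I_δ(j) = [r_j + δℓ_j, d_j - δℓ_j)`. -/
def RJob.deltaInterval (δ : ℝ) (j : RJob) : Set ℝ :=
  Set.Ico (j.r + δ * j.lax) (j.d - δ * j.lax)

/-- `j` δ-dominates `j*` if `I(j*) ⊆ I(j)` and `I(j*) ∩ I_δ(j) ≠ ∅`. -/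
def RJob.DeltaDominates (δ : ℝ) (j jstar : RJob) : Prop :=
  jstar.interval ⊆ j.interval ∧ (jstar.interval ∩ RJob.deltaInterval δ j).Nonempty

/-- Two real-parameter jobs are agreeable if `(r_j - r_{j'})·(d_j - d_{j'}) ≥ 0`. -/
def RAgreeable (j j' : RJob) : Prop := 0 ≤ (j.r - j'.r) * (j.d - j'.d)

/-- Two real-parameter jobs are `β`-agreeable: agreeable with intersecting `β`-intervals. -/
def RBetaAgreeable (β : ℝ) (j j' : RJob) : Prop :=
  RAgreeable j j' ∧ (RJob.deltaInterval β j ∩ RJob.deltaInterval β j').Nonempty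

theorem Set.add_div_two_mem_Ico_of_Ico_subset_of_inter_nonempty
    {𝕜 : Type*} [Field 𝕜] [LinearOrder 𝕜] [IsStrictOrderedRing 𝕜] {a b c e t : 𝕜}
    (hsub : Set.Ico a b ⊆ Set.Ico c e)
    (hmeet : (Set.Ico a b ∩ Set.Ico (c + t) (e - t)).Nonempty) :
    (a + b) / 2 ∈ Set.Ico (c + t / 2) (e - t / 2) := by
  obtain ⟨x, ⟨hax, hxb⟩, hctx, hxet⟩ := hmeet
  obtain ⟨hca, hbe⟩ := (Set.Ico_subset_Ico_iff (hax.trans_lt hxb)).mp hsub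
  constructor <;> linarith

theorem midpoint_in_half_delta_interval_general
    (δ : ℝ)
    (j : RJob)
    (jstar : RJob)
    (hdom : RJob.DeltaDominates δ j jstar) :
    (jstar.r + jstar.d) / 2 ∈ RJob.deltaInterval (δ / 2) j := by
  simpa only [RJob.deltaInterval, div_mul_eq_mul_div] using
    Set.add_div_two_mem_Ico_of_Ico_subset_of_inter_nonempty hdom.1 hdom.2

/-- midpoint claim: if `j` δ-dominates `j*`, then the midpoint
`(r_{j*} + d_{j*})/2` lies in `I_{δ/2}(j)`. -/
theorem midpoint_in_half_delta_interval
    (δ : ℝ) (hδ : δ ∈ Set.Ioc (0 : ℝ) (1 / 2))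
    (j : RJob) (hj : j.valid) (hpj : 0 < j.p)
    (jstar : RJob) (hjs : jstar.valid) (hstar : jstar.r < jstar.d)
    (hdom : RJob.DeltaDominates δ j jstar) :
    (jstar.r + jstar.d) / 2 ∈ RJob.deltaInterval (δ / 2) j :=
  midpoint_in_half_delta_interval_general δ j jstar hdom
end

section
/- (Window length of β-agreeable partners.) Let β ∈ (0,1/2] and let j, j' be jobs with real parameters. If j and j' are agreeable and I_β(j) ∩ I_β(j') ≠ ∅, then d_{j'} − r_{j'} > β·ℓ_j (and symmetrically d_j − r_j > β·ℓ_{j'}). -/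
/-!
A common point `x` of the two `β`-intervals satisfies `r_{j'} + βℓ_{j'} ≤ x < d_j - βℓ_j`, so
`βℓ_j + βℓ_{j'} < d_j - r_{j'}`, and symmetrically `< d_{j'} - r_j`. Agreeable jobs are ordered
in both release date and deadline, so the smaller of `d_j - r_{j'}` and `d_{j'} - r_j` is at most
both window lengths; since laxities are nonnegative, either summand alone is below each of them.
-/

theorem RJob.lax_nonneg {j : RJob} (h : j.r + j.p ≤ j.d) : 0 ≤ j.lax := by
  unfold RJob.lax
  linarith

theorem RJob.mul_lax_add_mul_lax_lt {β x : ℝ} {j j' : RJob} (hx : x ∈ RJob.deltaInterval β j)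
    (hx' : x ∈ RJob.deltaInterval β j') : β * j.lax + β * j'.lax < j.d - j'.r := by
  linarith [hx.2, hx'.1]

theorem RAgreeable.le_and_le_or_le_and_le {j j' : RJob} (h : RAgreeable j j') :
    (j.r ≤ j'.r ∧ j.d ≤ j'.d) ∨ (j'.r ≤ j.r ∧ j'.d ≤ j.d) := by
  rcases mul_nonneg_iff.mp h with ⟨hr, hd⟩ | ⟨hr, hd⟩
  · exact Or.inr ⟨sub_nonneg.mp hr, sub_nonneg.mp hd⟩
  · exact Or.inl ⟨sub_nonpos.mp hr, sub_nonpos.mp hd⟩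

/-- window length of β-agreeable partners: if `j` and `j'` are agreeable
and their `β`-intervals intersect, then `d_{j'} - r_{j'} > β·ℓ_j` and symmetrically. -/
theorem window_length_of_beta_agreeable
    (β : ℝ) (hβ : β ∈ Set.Ioc (0 : ℝ) (1 / 2))
    (j j' : RJob) (hj : j.valid) (hj' : j'.valid)
    (hagree : RAgreeable j j')
    (hint : (RJob.deltaInterval β j ∩ RJob.deltaInterval β j').Nonempty) :
    β * j.lax < j'.d - j'.r ∧ β * j'.lax < j.d - j.r := by
  obtain ⟨x, hx, hx'⟩ := hint
  have hℓ : 0 ≤ β * j.lax := mul_nonneg hβ.1.le (RJob.lax_nonneg hj.2)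
  have hℓ' : 0 ≤ β * j'.lax := mul_nonneg hβ.1.le (RJob.lax_nonneg hj'.2)
  have h := RJob.mul_lax_add_mul_lax_lt hx hx'
  have h' := RJob.mul_lax_add_mul_lax_lt hx' hx
  rcases hagree.le_and_le_or_le_and_le with ⟨hr, hd⟩ | ⟨hr, hd⟩ <;> constructor <;> linarith
end
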